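/- arXiv:1911.04257 — 5 statements merged into one kernel-verified Lean document; each statement's English description precedes it below -/
import Mathlib

section
/- Let G and G' be groups with identity elements e and e' respectively, Q a nonempty set, and μ : G × Q → [0,1], ν : G' × Q → [0,1] functions such that the product μ × ν, defined by (μ × ν)((x, x'), q) = min(μ(x,q), ν(x',q)), is an α-Q-fuzzy subgroup of G × G'. If μ(e, q) ≥ ν(x', q) for all x' ∈ G' and q ∈ Q, then ν is an α-Q-fuzzy subgroup of G'. -/
/-- `μ` is an α-Q-fuzzy subgroup of the group `G`. -/
def IsAlphaQFuzzySubgroup {G Q : Type*} [Group G] (μ : G → Q → ℝ) : Prop :=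
  (∀ x y q, μ (x * y) q ≥ min (μ x q) (μ y q)) ∧ (∀ x q, μ x⁻¹ q ≥ μ x q)

/-- If the product `μ × ν` is an α-Q-fuzzy subgroup of `G × G'` and
`μ(e, q) ≥ ν(x', q)` for all `x'` and `q`, then `ν` is an α-Q-fuzzy
subgroup of `G'`. -/
theorem snd_isSubgroup_of_prod {G G' Q : Type*} [Group G] [Group G'] [Nonempty Q]
    (μ : G → Q → ℝ) (ν : G' → Q → ℝ)
    (hμ01 : ∀ x q, μ x q ∈ Set.Icc (0 : ℝ) 1)
    (hν01 : ∀ x q, ν x q ∈ Set.Icc (0 : ℝ) 1)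
    (hprod : IsAlphaQFuzzySubgroup
      (fun (p : G × G') (q : Q) => min (μ p.1 q) (ν p.2 q)))
    (hdom : ∀ (x' : G') (q : Q), μ (1 : G) q ≥ ν x' q) :
    IsAlphaQFuzzySubgroup ν := by
  obtain ⟨hm, hi⟩ := hprod
  constructor
  · intro x y q
    have := hm ((1 : G), x) ((1 : G), y) q
    simpa [Prod.mk_mul_mk, min_eq_right (hdom x q), min_eq_right (hdom y q),
      min_eq_right (hdom (x * y) q)] using this
  · intro x q
    have := hi ((1 : G), x) q
    simpa [Prod.inv_mk, min_eq_right (hdom x q), min_eq_right (hdom x⁻¹ q)] using this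
end

section
/- Let G and G' be groups with identity elements e and e' respectively, Q a nonempty set, and μ : G × Q → [0,1], ν : G' × Q → [0,1] functions such that the product μ × ν, defined by (μ × ν)((x, x'), q) = min(μ(x,q), ν(x',q)), is an α-Q-fuzzy subgroup of G × G'. If ν(e', q) ≥ μ(x, q) for all x ∈ G and q ∈ Q, then μ is an α-Q-fuzzy subgroup of G. -/
/-- If the product `μ × ν` is an α-Q-fuzzy subgroup of `G × G'` and
`ν(e', q) ≥ μ(x, q)` for all `x` and `q`, then `μ` is an α-Q-fuzzy
subgroup of `G`. -/
theorem fst_isSubgroup_of_prod {G G' Q : Type*} [Group G] [Group G'] [Nonempty Q]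
    (μ : G → Q → ℝ) (ν : G' → Q → ℝ)
    (hμ01 : ∀ x q, μ x q ∈ Set.Icc (0 : ℝ) 1)
    (hν01 : ∀ x q, ν x q ∈ Set.Icc (0 : ℝ) 1)
    (hprod : IsAlphaQFuzzySubgroup
      (fun (p : G × G') (q : Q) => min (μ p.1 q) (ν p.2 q)))
    (hdom : ∀ (x : G) (q : Q), ν (1 : G') q ≥ μ x q) :
    IsAlphaQFuzzySubgroup μ := by
  obtain ⟨h1, h2⟩ := hprod
  have key : ∀ (x : G) (q : Q), min (μ x q) (ν (1 : G') q) = μ x q := fun x q =>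
    min_eq_left (hdom x q)
  constructor
  · intro x y q
    have := h1 (x, 1) (y, 1) q
    simpa [key] using this
  · intro x q
    have := h2 (x, 1) q
    simpa [key] using this
end

section
/- Let G and G' be groups, Q a nonempty set, and f : G → G' a surjective anti-homomorphism, i.e., f(xy) = f(y)f(x) for all x, y ∈ G. Let μ : G × Q → [0,1] be an α-Q-fuzzy subgroup of G, and define the image f(μ) : G' × Q → [0,1] by f(μ)(x', q) = sup{ μ(x, q) : x ∈ G, f(x) = x' } (supremum in the complete lattice [0,1]). Then f(μ) is an α-Q-fuzzy subgroup of G'. -/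
/-- The image of an α-Q-fuzzy subgroup under a surjective anti-homomorphism
is an α-Q-fuzzy subgroup.  The image `f(μ)(x', q)` is the supremum (in ℝ) of
`μ(x, q)` over the fiber `f x = x'`. -/
theorem image_antiHom_isSubgroup {G G' Q : Type*} [Group G] [Group G'] [Nonempty Q]
    (f : G → G') (hf : Function.Surjective f)
    (hanti : ∀ x y : G, f (x * y) = f y * f x)
    (μ : G → Q → ℝ)
    (h01 : ∀ x q, μ x q ∈ Set.Icc (0 : ℝ) 1)
    (hμ : IsAlphaQFuzzySubgroup μ) :
    IsAlphaQFuzzySubgroup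
      (fun (x' : G') (q : Q) => sSup {v : ℝ | ∃ x : G, f x = x' ∧ v = μ x q}) := by
  have hne : ∀ (z' : G') (q : Q), {v : ℝ | ∃ x : G, f x = z' ∧ v = μ x q}.Nonempty := by
    intro z' q
    obtain ⟨x, hx⟩ := hf z'
    exact ⟨μ x q, x, hx, rfl⟩
  have hbdd : ∀ (z' : G') (q : Q), BddAbove {v : ℝ | ∃ x : G, f x = z' ∧ v = μ x q} := by
    intro z' q
    exact ⟨1, fun v ⟨x, _, hv⟩ => hv ▸ (h01 x q).2⟩
  have hf1 : f 1 = 1 := by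
    have := hanti 1 1
    simpa using this
  have hfinv : ∀ x : G, f x⁻¹ = (f x)⁻¹ := by
    intro x
    have : f x⁻¹ * f x = 1 := by rw [← hanti, mul_inv_cancel, hf1]
    exact eq_inv_of_mul_eq_one_left this
  constructor
  · intro x' y' q
    refine le_of_forall_lt fun c hc => ?_
    obtain ⟨a, ⟨x, hx, rfl⟩, hca⟩ :=
      exists_lt_of_lt_csSup (hne x' q) (lt_of_lt_of_le hc (min_le_left _ _))
    obtain ⟨b, ⟨y, hy, rfl⟩, hcb⟩ :=
      exists_lt_of_lt_csSup (hne y' q) (lt_of_lt_of_le hc (min_le_right _ _))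
    have h1 : c < μ (y * x) q := by
      have h2 := hμ.1 y x q
      have h4 : c < min (μ y q) (μ x q) := lt_min hcb hca
      exact lt_of_lt_of_le h4 h2
    have h3 : μ (y * x) q ≤ sSup {v : ℝ | ∃ z : G, f z = x' * y' ∧ v = μ z q} :=
      le_csSup (hbdd _ _) ⟨y * x, by rw [hanti, hy, hx], rfl⟩
    exact lt_of_lt_of_le h1 h3
  · intro x' q
    refine csSup_le (hne x' q) ?_
    rintro a ⟨x, hx, rfl⟩
    have h1 : μ x q ≤ μ x⁻¹ q := hμ.2 x q
    have h2 : μ x⁻¹ q ≤ sSup {v : ℝ | ∃ z : G, f z = x'⁻¹ ∧ v = μ z q} :=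
      le_csSup (hbdd _ _) ⟨x⁻¹, by rw [hfinv, hx], rfl⟩
    exact h1.trans h2
end

section
/- Let G and G' be groups, Q a nonempty set, and f : G → G' a surjective group homomorphism. Let μ : G × Q → [0,1] be an α-Q-fuzzy subgroup of G, and define the image f(μ) : G' × Q → [0,1] by f(μ)(x', q) = sup{ μ(x, q) : x ∈ G, f(x) = x' } (supremum in the complete lattice [0,1]). Then f(μ) is an α-Q-fuzzy subgroup of G'. -/
section FuzzyImage

variable {G G' Q : Type*}

/-- Over an empty fibre this is `sSup ∅ = 0`; surjectivity of `f` rules that case out below. -/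
noncomputable def fuzzyImage (f : G → G') (μ : G → Q → ℝ) (x' : G') (q : Q) : ℝ :=
  sSup {v : ℝ | ∃ x : G, f x = x' ∧ v = μ x q}

variable {f : G → G'} {μ : G → Q → ℝ}

theorem le_fuzzyImage (hbdd : ∀ q, BddAbove (Set.range (μ · q))) (x : G) (q : Q) :
    μ x q ≤ fuzzyImage f μ (f x) q := by
  obtain ⟨C, hC⟩ := hbdd q
  refine le_csSup ⟨C, ?_⟩ ⟨x, rfl, rfl⟩
  rintro v ⟨y, -, rfl⟩
  exact hC ⟨y, rfl⟩

theorem fuzzyImage_le (hf : Function.Surjective f) {x' : G'} {q : Q} {c : ℝ}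
    (h : ∀ x, f x = x' → μ x q ≤ c) : fuzzyImage f μ x' q ≤ c := by
  obtain ⟨x, hx⟩ := hf x'
  refine csSup_le ⟨μ x q, x, hx, rfl⟩ ?_
  rintro v ⟨y, hy, rfl⟩
  exact h y hy

theorem exists_lt_of_lt_fuzzyImage (hf : Function.Surjective f) {x' : G'} {q : Q} {c : ℝ}
    (h : c < fuzzyImage f μ x' q) : ∃ x, f x = x' ∧ c < μ x q := by
  by_contra! hle
  exact (fuzzyImage_le hf hle).not_gt h

end FuzzyImage

theorem IsAlphaQFuzzySubgroup.fuzzyImage {G G' Q : Type*} [Group G] [Group G']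
    {μ : G → Q → ℝ} (hμ : IsAlphaQFuzzySubgroup μ) (hbdd : ∀ q, BddAbove (Set.range (μ · q)))
    (φ : G →* G') (hφ : Function.Surjective φ) :
    IsAlphaQFuzzySubgroup (fuzzyImage φ μ) := by
  constructor
  · intro x' y' q
    refine le_of_forall_lt fun c hc => ?_
    obtain ⟨x, rfl, hcx⟩ := exists_lt_of_lt_fuzzyImage hφ (lt_min_iff.mp hc).1
    obtain ⟨y, rfl, hcy⟩ := exists_lt_of_lt_fuzzyImage hφ (lt_min_iff.mp hc).2
    calc c < min (μ x q) (μ y q) := lt_min hcx hcy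
      _ ≤ μ (x * y) q := hμ.1 x y q
      _ ≤ _ := map_mul φ x y ▸ le_fuzzyImage hbdd (x * y) q
  · intro x' q
    refine fuzzyImage_le hφ ?_
    rintro x rfl
    calc μ x q ≤ μ x⁻¹ q := hμ.2 x q
      _ ≤ _ := map_inv φ x ▸ le_fuzzyImage hbdd x⁻¹ q

theorem image_hom_isSubgroup_general {G G' Q : Type*} [Group G] [Group G']
    (f : G → G') (hf : Function.Surjective f)
    (hhom : ∀ x y : G, f (x * y) = f x * f y)
    (μ : G → Q → ℝ)
    (h01 : ∀ x q, μ x q ∈ Set.Icc (0 : ℝ) 1)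
    (hμ : IsAlphaQFuzzySubgroup μ) :
    IsAlphaQFuzzySubgroup
      (fun (x' : G') (q : Q) => sSup {v : ℝ | ∃ x : G, f x = x' ∧ v = μ x q}) :=
  hμ.fuzzyImage (fun q => ⟨1, by rintro _ ⟨x, rfl⟩; exact (h01 x q).2⟩) (MonoidHom.mk' f hhom) hf

/-- The image of an α-Q-fuzzy subgroup under a surjective group homomorphism
is an α-Q-fuzzy subgroup.  The image `f(μ)(x', q)` is the supremum (in ℝ) of
`μ(x, q)` over the fiber `f x = x'`. -/
theorem image_hom_isSubgroup {G G' Q : Type*} [Group G] [Group G'] [Nonempty Q]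
    (f : G → G') (hf : Function.Surjective f)
    (hhom : ∀ x y : G, f (x * y) = f x * f y)
    (μ : G → Q → ℝ)
    (h01 : ∀ x q, μ x q ∈ Set.Icc (0 : ℝ) 1)
    (hμ : IsAlphaQFuzzySubgroup μ) :
    IsAlphaQFuzzySubgroup
      (fun (x' : G') (q : Q) => sSup {v : ℝ | ∃ x : G, f x = x' ∧ v = μ x q}) :=
  image_hom_isSubgroup_general f hf hhom μ h01 hμ
end

section
/- Let G and G' be groups with identity elements e and e' respectively, Q a nonempty set, and f : G → G' an injective anti-homomorphism, i.e., f(xy) = f(y)f(x) for all x, y ∈ G. Let ν : G' × Q → [0,1] be an α-Q-fuzzy subgroup of G', and let μ = f⁻¹(ν) be its inverse image, μ(x, q) = ν(f(x), q). If the set X' = { y ∈ G' : ν(y, q) = ν(e', q) for all q ∈ Q } is abelian (any two of its elements commute), then the set X = { x ∈ G : μ(x, q) = μ(e, q) for all q ∈ Q } is abelian; that is, the inverse image of an α-Q-fuzzy abelian subgroup under an injective anti-homomorphism is an α-Q-fuzzy abelian subgroup. -/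
/-! An anti-homomorphism preserves the identity, so `f` maps `X` into `X'`, and an injective
one reflects commutation. -/

theorem map_one_of_map_mul_rev {M N : Type*} [MulOneClass M] [Monoid N] [IsLeftCancelMul N]
    {f : M → N} (hf : ∀ x y, f (x * y) = f y * f x) : f 1 = 1 :=
  mul_eq_left.mp (by rw [← hf 1 1, one_mul])

theorem Commute.of_map_of_map_mul_rev {M N : Type*} [Mul M] [Mul N] {f : M → N}
    (hinj : Function.Injective f) (hf : ∀ x y, f (x * y) = f y * f x) {a b : M}
    (h : Commute (f a) (f b)) : Commute a b :=
  hinj (by rw [hf, hf, h.eq])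

theorem preimage_abelian_general {G G' Q : Type*} [Group G] [Group G']
    (f : G → G') (hinj : Function.Injective f)
    (hanti : ∀ x y : G, f (x * y) = f y * f x)
    (ν : G' → Q → ℝ)
    (μ : G → Q → ℝ)
    (hμdef : ∀ (x : G) (q : Q), μ x q = ν (f x) q)
    (habel : ∀ a ∈ {y : G' | ∀ q : Q, ν y q = ν (1 : G') q},
      ∀ b ∈ {y : G' | ∀ q : Q, ν y q = ν (1 : G') q}, a * b = b * a) :
    ∀ a ∈ {x : G | ∀ q : Q, μ x q = μ (1 : G) q},
      ∀ b ∈ {x : G | ∀ q : Q, μ x q = μ (1 : G) q}, a * b = b * a := by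
  intro a ha b hb
  have maps_core : ∀ x, (∀ q, μ x q = μ 1 q) → ∀ q, ν (f x) q = ν 1 q := fun x hx q => by
    simpa only [hμdef, map_one_of_map_mul_rev hanti] using hx q
  exact Commute.of_map_of_map_mul_rev hinj hanti (habel _ (maps_core a ha) _ (maps_core b hb))

/-- The inverse image of an α-Q-fuzzy abelian subgroup under an injective
anti-homomorphism is α-Q-fuzzy abelian: if
`X' = {y ∈ G' | ν(y,q) = ν(e',q) ∀q}` is abelian, then so is
`X = {x ∈ G | μ(x,q) = μ(e,q) ∀q}` where `μ = f⁻¹(ν)`. -/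
theorem preimage_abelian {G G' Q : Type*} [Group G] [Group G'] [Nonempty Q]
    (f : G → G') (hinj : Function.Injective f)
    (hanti : ∀ x y : G, f (x * y) = f y * f x)
    (ν : G' → Q → ℝ)
    (h01 : ∀ x q, ν x q ∈ Set.Icc (0 : ℝ) 1)
    (hν : IsAlphaQFuzzySubgroup ν)
    (μ : G → Q → ℝ)
    (hμdef : ∀ (x : G) (q : Q), μ x q = ν (f x) q)
    (habel : ∀ a ∈ {y : G' | ∀ q : Q, ν y q = ν (1 : G') q},
      ∀ b ∈ {y : G' | ∀ q : Q, ν y q = ν (1 : G') q}, a * b = b * a) :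
    ∀ a ∈ {x : G | ∀ q : Q, μ x q = μ (1 : G) q},
      ∀ b ∈ {x : G | ∀ q : Q, μ x q = μ (1 : G) q}, a * b = b * a :=
  preimage_abelian_general f hinj hanti ν μ hμdef habel
end
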